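/- Let a = (a₁,…,aₙ) and b = (b₁,…,b_m) be two Id-quiddity sequences (of lengths n, m ≥ 2). Define, for 1 ≤ k ≤ n−1, a ∘ₖ b = (a₁,…,a_{k−1}, a_k+b₁−1, b₂,…,b_{m−1}, b_m−1, a_{k+1}−1, a_{k+2},…,aₙ), and a ∘ₙ b = (a₁−1, a₂,…,a_{n−1}, aₙ+b₁−1, b₂,…,b_{m−1}, b_m−1). Then for every k ∈ {1,…,n}, a ∘ₖ b is an Id-quiddity sequence of length n+m−1. -/

import Mathlib

/-!
Write `b = (b₀, t, bₗ)`. From `M(bₗ)·M(t)·M(b₀) = Id` the product over `t` is `M(bₗ)⁻¹M(b₀)⁻¹`, and a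
2×2 computation gives `M(y−1)·M(bₗ−1)·M(bₗ)⁻¹M(b₀)⁻¹·M(x+b₀−1) = M(y)·M(x)`. So replacing two adjacent
entries `x, y` of `a` by `x+b₀−1, t, bₗ−1, y−1` leaves the product unchanged. For `k = n` the pair is
`(aₙ, a₁)`, adjacent only cyclically; since `PQ = Id ↔ QP = Id` for square matrices, being an
`Id`-quiddity sequence is invariant under rotation, which reduces this case to the first one.
-/

/-- The 2×2 matrix `M(a) = [[a, -1], [1, 0]]`. -/
noncomputable def Mmat (a : ℂ) : Matrix (Fin 2) (Fin 2) ℂ := !![a, -1; 1, 0]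

/-- An `Id`-quiddity sequence: a tuple `(a₁,…,aₙ)` with
`M(aₙ)·M(aₙ₋₁)···M(a₁) = Id`. -/
def IsIdQS (A : List ℂ) : Prop := (A.reverse.map Mmat).prod = 1

/-- The product `a ∘ₖ b` for `Id`-quiddity sequences, with `1`-based index `k`.
For `1 ≤ k ≤ n-1` (i.e. `k < A.length`) it is
`(a₁,…,a_{k−1}, a_k+b₁−1, b₂,…,b_{m−1}, b_m−1, a_{k+1}−1, a_{k+2},…,aₙ)`,
and for `k = n` it is `(a₁−1, a₂,…,a_{n−1}, aₙ+b₁−1, b₂,…,b_{m−1}, b_m−1)`. -/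
noncomputable def idcomp (A B : List ℂ) (k : ℕ) : List ℂ :=
  if k < A.length then
    A.take (k - 1) ++ (A.getD (k - 1) 0 + B.getD 0 0 - 1) ::
      ((B.drop 1).dropLast ++ (B.getLastD 0 - 1) :: (A.getD k 0 - 1) :: A.drop (k + 1))
  else
    (A.getD 0 0 - 1) :: ((A.drop 1).dropLast ++ (A.getLastD 0 + B.getD 0 0 - 1) ::
      ((B.drop 1).dropLast ++ [B.getLastD 0 - 1]))

noncomputable def Mprod (l : List ℂ) : Matrix (Fin 2) (Fin 2) ℂ := (l.reverse.map Mmat).prod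

lemma Mprod_append (l₁ l₂ : List ℂ) : Mprod (l₁ ++ l₂) = Mprod l₂ * Mprod l₁ := by
  simp [Mprod]

lemma Mprod_cons (a : ℂ) (l : List ℂ) : Mprod (a :: l) = Mprod l * Mmat a := by
  simp [Mprod]

noncomputable def MmatInv (a : ℂ) : Matrix (Fin 2) (Fin 2) ℂ := !![0, 1; -1, a]

lemma Mmat_mul_MmatInv (a : ℂ) : Mmat a * MmatInv a = 1 := by
  simp [Mmat, MmatInv, Matrix.one_fin_two]

lemma MmatInv_mul_Mmat (a : ℂ) : MmatInv a * Mmat a = 1 := by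
  simp [Mmat, MmatInv, Matrix.one_fin_two]

lemma Mprod_eq_of_isIdQS {b₀ bₗ : ℂ} {t : List ℂ} (h : IsIdQS (b₀ :: (t ++ [bₗ]))) :
    Mprod t = MmatInv bₗ * MmatInv b₀ := by
  have h' : Mmat bₗ * Mprod t * Mmat b₀ = 1 := by
    change Mprod _ = 1 at h
    simpa [Mprod_cons, Mprod_append, Mprod, mul_assoc] using h
  calc Mprod t = MmatInv bₗ * (Mmat bₗ * Mprod t * Mmat b₀) * MmatInv b₀ := by
        simp only [← mul_assoc, MmatInv_mul_Mmat, one_mul]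
        rw [mul_assoc, Mmat_mul_MmatInv, mul_one]
    _ = MmatInv bₗ * MmatInv b₀ := by rw [h', mul_one]

lemma Mmat_insert_eq_Mmat_mul_Mmat (x y b₀ bₗ : ℂ) :
    Mmat (y - 1) * Mmat (bₗ - 1) * (MmatInv bₗ * MmatInv b₀) * Mmat (x + b₀ - 1) =
      Mmat y * Mmat x := by
  ext i j
  fin_cases i <;> fin_cases j <;> simp [Mmat, MmatInv] <;> ring

lemma Mprod_insert {b₀ bₗ : ℂ} {t : List ℂ} (hB : IsIdQS (b₀ :: (t ++ [bₗ])))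
    (p q : List ℂ) (x y : ℂ) :
    Mprod (p ++ (x + b₀ - 1) :: (t ++ (bₗ - 1) :: (y - 1) :: q)) = Mprod (p ++ x :: y :: q) := by
  simp only [Mprod_append, Mprod_cons, Mprod_eq_of_isIdQS hB]
  calc _ = Mprod q * (Mmat (y - 1) * Mmat (bₗ - 1) * (MmatInv bₗ * MmatInv b₀) *
          Mmat (x + b₀ - 1)) * Mprod p := by noncomm_ring
    _ = _ := by rw [Mmat_insert_eq_Mmat_mul_Mmat]; noncomm_ring

lemma isIdQS_append_comm (l₁ l₂ : List ℂ) : IsIdQS (l₁ ++ l₂) ↔ IsIdQS (l₂ ++ l₁) := by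
  change Mprod _ = 1 ↔ Mprod _ = 1
  rw [Mprod_append, Mprod_append, mul_eq_one_comm]

lemma idcomp_of_lt {p q t : List ℂ} {x y b₀ bₗ : ℂ} {k : ℕ} (hk : p.length + 1 = k) :
    idcomp (p ++ x :: y :: q) (b₀ :: (t ++ [bₗ])) k =
      p ++ (x + b₀ - 1) :: (t ++ (bₗ - 1) :: (y - 1) :: q) := by
  subst hk
  simp [idcomp, List.getD_eq_getElem?_getD, List.getLast?_cons, Nat.add_assoc,
    List.drop_length_add_append]

lemma idcomp_of_length_le {s t : List ℂ} {a₀ aₗ b₀ bₗ : ℂ} {k : ℕ}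
    (hk : s.length + 2 ≤ k) :
    idcomp (a₀ :: (s ++ [aₗ])) (b₀ :: (t ++ [bₗ])) k =
      (a₀ - 1) :: (s ++ (aₗ + b₀ - 1) :: (t ++ [bₗ - 1])) := by
  rw [idcomp, if_neg (by simp only [List.length_append, List.length_cons, List.length_nil]; omega)]
  simp [List.getLast?_cons]

lemma List.exists_eq_cons_append_singleton {α : Type*} {l : List α} (h : 2 ≤ l.length) :
    ∃ a t b, l = a :: (t ++ [b]) := by
  obtain ⟨a, l', rfl⟩ := List.exists_cons_of_length_pos (by omega : 0 < l.length)
  have hl' : l' ≠ [] := by rintro rfl; simp at h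
  exact ⟨a, l'.dropLast, l'.getLast hl', by rw [List.dropLast_append_getLast]⟩

lemma List.exists_eq_append_cons_cons {α : Type*} {l : List α} {k : ℕ} (h : k + 1 < l.length) :
    ∃ p x y q, l = p ++ x :: y :: q ∧ p.length = k := by
  refine ⟨l.take k, l[k], l[k + 1], l.drop (k + 2), ?_, by simp only [List.length_take]; omega⟩
  rw [← List.drop_eq_getElem_cons, ← List.drop_eq_getElem_cons, List.take_append_drop]

/-- If `a` and `b` are `Id`-quiddity sequences of lengths `n, m ≥ 2`, then
`a ∘ₖ b` is an `Id`-quiddity sequence of length `n+m−1`, for every `k ∈ {1,…,n}`. -/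
theorem idqs_closed_under_circ (n m : ℕ) (hn : 2 ≤ n) (hm : 2 ≤ m) (A B : List ℂ)
    (hA : A.length = n) (hB : B.length = m) (hAq : IsIdQS A) (hBq : IsIdQS B) :
    ∀ k, 1 ≤ k → k ≤ n →
      IsIdQS (idcomp A B k) ∧ (idcomp A B k).length = n + m - 1 := by
  intro k hk1 hkn
  subst hA hB
  obtain ⟨b₀, t, bₗ, rfl⟩ := List.exists_eq_cons_append_singleton hm
  rcases hkn.lt_or_eq with hkn | rfl
  · obtain ⟨p, x, y, q, rfl, hp⟩ := List.exists_eq_append_cons_cons (l := A) (k := k - 1)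
      (by omega)
    rw [idcomp_of_lt (by omega : p.length + 1 = k)]
    refine ⟨(Mprod_insert hBq p q x y).trans hAq, ?_⟩
    simp only [List.length_append, List.length_cons, List.length_nil]
    omega
  · obtain ⟨a₀, s, aₗ, rfl⟩ := List.exists_eq_cons_append_singleton hn
    rw [idcomp_of_length_le (by simp)]
    refine ⟨?_, by simp only [List.length_append, List.length_cons, List.length_nil]; omega⟩
    have hrot : IsIdQS ([] ++ aₗ :: a₀ :: s) :=
      (isIdQS_append_comm [aₗ] (a₀ :: s)).2 (by simpa using hAq)
    have hins : IsIdQS ([] ++ (aₗ + b₀ - 1) :: (t ++ (bₗ - 1) :: (a₀ - 1) :: s)) :=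
      (Mprod_insert hBq [] s aₗ a₀).trans hrot
    simpa using (isIdQS_append_comm ((a₀ - 1) :: s) ((aₗ + b₀ - 1) :: (t ++ [bₗ - 1]))).2
      (by simpa using hins)
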